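/- Fix p with 1 ≤ p < 16, set κ := 8/3 − p/6, and fix 0 < K₂ < 1. Define Θ(ξ; t) := ξ³/3 − tξ and the contour parametrization ξ(u) := 2τ + 2^{−1/3} u (−1/2 + (2/√3) i) (this is ξ₊ = (λ + 2^{1/3}τ)/2^{1/3} along the deformed contour J₂ given by λ(u) = 2^{1/3}τ + u(−1/2 + (2/√3)i)). Then there exist C > 0 and τ₀ > 0 such that for all τ ≥ τ₀ and all δ with 0 < δ ≤ K₂ κ τ², setting t := 4τ² − δ, one has ∫_0^{2^{1/3}τ} exp( p · Re( Θ(ξ(u); t) ) ) du ≤ C e^{−2 p κ (1−K₂) τ³}. Thus the entry e^{Θ(ξ₊,t)} of the jump matrix J₂ is exponentially suppressed in L^p norm as τ → +∞. -/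
import Mathlib


open MeasureTheory Set Complex

/-- The rescaled Airy phase `Θ(ξ;t) := ξ³/3 − tξ`. -/
noncomputable def ThetaAiry (ξ : ℂ) (t : ℝ) : ℂ := ξ ^ 3 / 3 - (t : ℂ) * ξ

/-- The parametrization `ξ(u) = 2τ + 2^{−1/3}u(−1/2 + (2/√3)i)` of
`ξ₊ = (λ + 2^{1/3}τ)/2^{1/3}` along the deformed contour `J₂` given by
`λ(u) = 2^{1/3}τ + u(−1/2 + (2/√3)i)`. -/
noncomputable def xiJ2 (τ u : ℝ) : ℂ :=
  (2 * τ : ℝ) + ((2 : ℝ) ^ (-(1 : ℝ) / 3) * u : ℝ) * (-(1 / 2) + (2 / Real.sqrt 3 : ℝ) * Complex.I)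

/-- Real part of the Airy phase in terms of real and imaginary parts. -/
lemma theta_re (ξ : ℂ) (t : ℝ) :
    (ThetaAiry ξ t).re = ξ.re ^ 3 / 3 - ξ.re * ξ.im ^ 2 - t * ξ.re := by
  have h3 : (3 : ℂ) = ((3 : ℝ) : ℂ) := by norm_num
  simp only [ThetaAiry, h3, Complex.sub_re, Complex.div_ofReal_re, pow_succ, pow_zero, one_mul,
    Complex.mul_re, Complex.mul_im, Complex.ofReal_re, Complex.ofReal_im]
  ring

lemma xiJ2_re (τ u : ℝ) : (xiJ2 τ u).re = 2 * τ - ((2:ℝ)^(-(1:ℝ)/3) * u) / 2 := by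
  simp [xiJ2]; ring

lemma xiJ2_im (τ u : ℝ) : (xiJ2 τ u).im = 2 * ((2:ℝ)^(-(1:ℝ)/3) * u) / Real.sqrt 3 := by
  simp [xiJ2]; ring

/-- The phase along the contour is maximized at the endpoint `v = 0`. -/
lemma key (τ δ v : ℝ) (hτ : 1 ≤ τ) (hv0 : 0 ≤ v) (hvτ : v ≤ τ) (hδ : 0 < δ) :
    (2*τ - v/2)^3/3 - (2*τ - v/2)*(2*v/Real.sqrt 3)^2 - (4*τ^2-δ)*(2*τ-v/2)
      ≤ 2*τ*δ - 16*τ^3/3 := by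
  have hs : Real.sqrt 3 ^ 2 = 3 := Real.sq_sqrt (by norm_num)
  have hs0 : Real.sqrt 3 ≠ 0 := by positivity
  have h : (2*v/Real.sqrt 3)^2 = 4*v^2/3 := by
    field_simp
    nlinarith [hs]
  rw [h]
  nlinarith [sq_nonneg v, mul_nonneg hv0 hv0]

/-- The entry `e^{Θ(ξ₊,t)}` of the jump matrix `J₂` is exponentially suppressed in `L^p` norm
as `τ → +∞`: fixing `1 ≤ p < 16`, `κ := 8/3 − p/6` and `0 < K₂ < 1`, there are `C > 0` and
`τ₀ > 0` such that for all `τ ≥ τ₀` and all `0 < δ ≤ K₂κτ²`, with `t := 4τ² − δ`,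
`∫₀^{2^{1/3}τ} e^{p·Re Θ(ξ(u);t)} du ≤ C e^{−2pκ(1−K₂)τ³}`. -/
theorem jump_J2_exponentially_suppressed (p K₂ : ℝ) (hp1 : 1 ≤ p) (hp16 : p < 16)
    (hK₂0 : 0 < K₂) (hK₂1 : K₂ < 1) :
    ∃ C > (0 : ℝ), ∃ τ₀ > (0 : ℝ), ∀ τ : ℝ, τ₀ ≤ τ → ∀ δ : ℝ, 0 < δ →
      δ ≤ K₂ * (8 / 3 - p / 6) * τ ^ 2 →
      (∫ u in (0 : ℝ)..((2 : ℝ) ^ ((1 : ℝ) / 3) * τ),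
          Real.exp (p * (ThetaAiry (xiJ2 τ u) (4 * τ ^ 2 - δ)).re)) ≤
        C * Real.exp (-2 * p * (8 / 3 - p / 6) * (1 - K₂) * τ ^ 3) := by
  refine ⟨4, by norm_num, 1, by norm_num, fun τ hτ δ hδ hδ2 => ?_⟩
  have hτ0 : (0:ℝ) < τ := lt_of_lt_of_le one_pos hτ
  set L : ℝ := (2 : ℝ) ^ ((1 : ℝ) / 3) * τ with hL
  have hLpos : 0 < L := mul_pos (Real.rpow_pos_of_pos two_pos _) hτ0
  have hpow : (2:ℝ)^(-(1:ℝ)/3) * (2:ℝ)^((1:ℝ)/3) = 1 := by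
    rw [← Real.rpow_add two_pos]; norm_num
  have hM : ∀ u ∈ Set.Icc (0:ℝ) L,
      p * (ThetaAiry (xiJ2 τ u) (4 * τ ^ 2 - δ)).re ≤ p * (2*τ*δ - 16*τ^3/3) := by
    intro u hu
    have hv0 : 0 ≤ (2:ℝ)^(-(1:ℝ)/3) * u :=
      mul_nonneg (Real.rpow_nonneg (by norm_num) _) hu.1
    have hvτ : (2:ℝ)^(-(1:ℝ)/3) * u ≤ τ := by
      have h1 := mul_le_mul_of_nonneg_left hu.2
        (Real.rpow_nonneg (x := (2:ℝ)) (by norm_num) (-(1:ℝ)/3))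
      calc (2:ℝ)^(-(1:ℝ)/3) * u ≤ (2:ℝ)^(-(1:ℝ)/3) * ((2:ℝ)^((1:ℝ)/3) * τ) := h1
        _ = τ := by rw [← mul_assoc, hpow, one_mul]
    refine mul_le_mul_of_nonneg_left ?_ (by linarith)
    rw [theta_re, xiJ2_re, xiJ2_im]
    exact key τ δ _ hτ hv0 hvτ hδ
  have hcont : Continuous fun u : ℝ =>
      Real.exp (p * (ThetaAiry (xiJ2 τ u) (4 * τ ^ 2 - δ)).re) := by
    unfold ThetaAiry xiJ2; fun_prop
  have hint : (∫ u in (0:ℝ)..L, Real.exp (p * (ThetaAiry (xiJ2 τ u) (4 * τ ^ 2 - δ)).re)) ≤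
      L * Real.exp (p * (2*τ*δ - 16*τ^3/3)) := by
    have h1 : (∫ u in (0:ℝ)..L, Real.exp (p * (ThetaAiry (xiJ2 τ u) (4 * τ ^ 2 - δ)).re)) ≤
        ∫ _ in (0:ℝ)..L, Real.exp (p * (2*τ*δ - 16*τ^3/3)) := by
      apply intervalIntegral.integral_mono_on hLpos.le
        (hcont.intervalIntegrable _ _) intervalIntegrable_const
      intro u hu
      exact Real.exp_le_exp.mpr (hM u hu)
    simpa using h1
  refine hint.trans ?_
  have hexp : p * (2*τ*δ - 16*τ^3/3) ≤
      -2 * p * (8 / 3 - p / 6) * (1 - K₂) * τ ^ 3 - τ^3/3 := by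
    have hδ3 : δ * τ ≤ K₂ * (8 / 3 - p / 6) * τ ^ 3 := by
      calc δ * τ ≤ (K₂ * (8 / 3 - p / 6) * τ ^ 2) * τ :=
            mul_le_mul_of_nonneg_right hδ2 hτ0.le
        _ = K₂ * (8 / 3 - p / 6) * τ ^ 3 := by ring
    have hp0 : (0:ℝ) < p := by linarith
    nlinarith [mul_le_mul_of_nonneg_left hδ3 hp0.le, pow_pos hτ0 3,
      mul_nonneg (by nlinarith : (0:ℝ) ≤ p^2 - 1) (pow_pos hτ0 3).le]
  calc L * Real.exp (p * (2*τ*δ - 16*τ^3/3))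
      ≤ L * Real.exp (-2 * p * (8 / 3 - p / 6) * (1 - K₂) * τ ^ 3 - τ^3/3) :=
        mul_le_mul_of_nonneg_left (Real.exp_le_exp.mpr hexp) hLpos.le
    _ = (L * Real.exp (-(τ^3/3))) * Real.exp (-2 * p * (8 / 3 - p / 6) * (1 - K₂) * τ ^ 3) := by
        rw [show (-2 * p * (8 / 3 - p / 6) * (1 - K₂) * τ ^ 3 - τ^3/3)
            = (-(τ^3/3)) + (-2 * p * (8 / 3 - p / 6) * (1 - K₂) * τ ^ 3) by ring,
          Real.exp_add]
        ring
    _ ≤ 4 * Real.exp (-2 * p * (8 / 3 - p / 6) * (1 - K₂) * τ ^ 3) := by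
        refine mul_le_mul_of_nonneg_right ?_ (Real.exp_pos _).le
        have h2 : (2:ℝ)^((1:ℝ)/3) ≤ 2 := by
          calc (2:ℝ)^((1:ℝ)/3) ≤ (2:ℝ)^(1:ℝ) :=
                Real.rpow_le_rpow_of_exponent_le (by norm_num) (by norm_num)
            _ = 2 := Real.rpow_one 2
        have hexp2 : τ * Real.exp (-(τ^3/3)) ≤ 2 := by
          rw [Real.exp_neg, ← div_eq_mul_inv, div_le_iff₀ (Real.exp_pos _)]
          have h3 := Real.add_one_le_exp (τ^3/3)
          nlinarith [mul_nonneg (sq_nonneg (τ-1)) hτ0.le]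
        calc L * Real.exp (-(τ^3/3)) = (2:ℝ)^((1:ℝ)/3) * (τ * Real.exp (-(τ^3/3))) := by
              rw [hL]; ring
          _ ≤ 2 * 2 := by
              apply mul_le_mul h2 hexp2 (mul_nonneg hτ0.le (Real.exp_pos _).le) (by norm_num)
          _ = 4 := by norm_num
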